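/- N-partite entropic Bell inequality $M_N$: for jointly distributed discrete random variables $X^j_i$ ($j=1,\dots,N$, $i\in\{0,1\}$), one has $H(X^1_1,\dots,X^N_1)-H(X^1_0,\dots,X^N_0)-\sum_{j=1}^N H(X^1_0,\dots,X^{j}_1,\dots,X^N_0)+\sum_{j=1}^N H(X^1_0,\dots,\widehat{X^j_0},\dots,X^N_0)\leq 0$, where in the first sum exactly the $j$-th party's variable is set to subscript $1$, and in the second sum $\widehat{X^j_0}$ means variable $X^j_0$ is omitted. -/
import Mathlib


open Finset

/-- Shannon entropy of a discrete random variable `X` on a finite probability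
space with weights `p`. -/
noncomputable def shannonEntropy {Ω α : Type*} [Fintype Ω] [Fintype α] [DecidableEq α]
    (p : Ω → ℝ) (X : Ω → α) : ℝ :=
  ∑ x : α, Real.negMulLog (∑ ω ∈ Finset.univ.filter (fun ω => X ω = x), p ω)

lemma negMulLog_add_le {a b : ℝ} (ha : 0 ≤ a) (hb : 0 ≤ b) :
    Real.negMulLog (a + b) ≤ Real.negMulLog a + Real.negMulLog b := by
  have h1 : -(a * Real.log (a + b)) ≤ Real.negMulLog a := by
    rcases eq_or_lt_of_le ha with h | h
    · simp [← h]
    · rw [Real.negMulLog, neg_mul, neg_le_neg_iff]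
      exact mul_le_mul_of_nonneg_left (Real.log_le_log h (by linarith)) ha
  have h2 : -(b * Real.log (a + b)) ≤ Real.negMulLog b := by
    rcases eq_or_lt_of_le hb with h | h
    · simp [← h]
    · rw [Real.negMulLog, neg_mul, neg_le_neg_iff]
      exact mul_le_mul_of_nonneg_left (Real.log_le_log h (by linarith)) hb
  calc Real.negMulLog (a + b) = -(a * Real.log (a+b)) + -(b * Real.log (a+b)) := by
        rw [Real.negMulLog]; ring
  _ ≤ _ := add_le_add h1 h2

lemma negMulLog_sum_le {ι : Type*} (s : Finset ι) (a : ι → ℝ) (ha : ∀ i ∈ s, 0 ≤ a i) :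
    Real.negMulLog (∑ i ∈ s, a i) ≤ ∑ i ∈ s, Real.negMulLog (a i) := by
  induction s using Finset.cons_induction with
  | empty => simp
  | cons i s hi ih =>
    rw [Finset.sum_cons, Finset.sum_cons]
    calc Real.negMulLog (a i + ∑ j ∈ s, a j)
        ≤ Real.negMulLog (a i) + Real.negMulLog (∑ j ∈ s, a j) :=
          negMulLog_add_le (ha i (Finset.mem_cons_self i s))
            (Finset.sum_nonneg fun j hj => ha j (Finset.mem_cons_of_mem hj))
      _ ≤ _ := by
          have := ih (fun j hj => ha j (Finset.mem_cons_of_mem hj))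
          linarith

lemma fiber_sum {Ω α β : Type*} [Fintype Ω] [Fintype α] [DecidableEq α] [DecidableEq β]
    (p : Ω → ℝ) (X : Ω → α) (f : α → β) (y : β) :
    ∑ ω ∈ Finset.univ.filter (fun ω => f (X ω) = y), p ω
      = ∑ x ∈ Finset.univ.filter (fun x => f x = y),
          ∑ ω ∈ Finset.univ.filter (fun ω => X ω = x), p ω := by
  rw [← Finset.sum_fiberwise_of_maps_to (s := Finset.univ.filter (fun ω => f (X ω) = y))
      (g := X) (t := Finset.univ.filter (fun x => f x = y))
      (fun ω hω => by simpa using (Finset.mem_filter.mp hω).2) p]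
  refine Finset.sum_congr rfl fun x hx => ?_
  refine Finset.sum_congr ?_ fun _ _ => rfl
  ext ω
  simp only [Finset.mem_filter, Finset.mem_univ, true_and] at hx ⊢
  constructor
  · rintro ⟨_, h⟩; exact h
  · rintro h; exact ⟨h ▸ hx, h⟩

lemma shannonEntropy_comp_le {Ω α β : Type*} [Fintype Ω] [Fintype α] [Fintype β]
    [DecidableEq α] [DecidableEq β] (p : Ω → ℝ) (hp : ∀ ω, 0 ≤ p ω)
    (X : Ω → α) (f : α → β) :
    shannonEntropy p (fun ω => f (X ω)) ≤ shannonEntropy p X := by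
  unfold shannonEntropy
  calc ∑ y : β, Real.negMulLog (∑ ω ∈ Finset.univ.filter (fun ω => f (X ω) = y), p ω)
      = ∑ y : β, Real.negMulLog (∑ x ∈ Finset.univ.filter (fun x => f x = y),
          ∑ ω ∈ Finset.univ.filter (fun ω => X ω = x), p ω) := by
        refine Finset.sum_congr rfl fun y _ => ?_
        rw [fiber_sum p X f y]
    _ ≤ ∑ y : β, ∑ x ∈ Finset.univ.filter (fun x => f x = y),
          Real.negMulLog (∑ ω ∈ Finset.univ.filter (fun ω => X ω = x), p ω) := by
        refine Finset.sum_le_sum fun y _ => ?_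
        exact negMulLog_sum_le _ _ fun x _ => Finset.sum_nonneg fun ω _ => hp ω
    _ = _ := Finset.sum_fiberwise _ f _

lemma shannonEntropy_congr {Ω α β : Type*} [Fintype Ω] [Fintype α] [Fintype β]
    [DecidableEq α] [DecidableEq β] (p : Ω → ℝ) (hp : ∀ ω, 0 ≤ p ω)
    (X : Ω → α) (Y : Ω → β) (f : α → β) (g : β → α)
    (hf : ∀ ω, f (X ω) = Y ω) (hg : ∀ ω, g (Y ω) = X ω) :
    shannonEntropy p X = shannonEntropy p Y := by
  refine le_antisymm ?_ ?_
  · have := shannonEntropy_comp_le p hp Y g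
    have e : (fun ω => g (Y ω)) = X := funext hg
    rwa [e] at this
  · have := shannonEntropy_comp_le p hp X f
    have e : (fun ω => f (X ω)) = Y := funext hf
    rwa [e] at this

section Submod

variable {α β γ : Type*} [Fintype α] [Fintype β] [Fintype γ]
  [DecidableEq α] [DecidableEq β] [DecidableEq γ]

lemma marg_regroup {ι κ : Type*} [Fintype ι] [Fintype κ] [DecidableEq κ]
    (q : ι → ℝ) (g : ι → κ) (c : κ → ℝ) :
    ∑ k : κ, (∑ t ∈ Finset.univ.filter (fun t => g t = k), q t) * c k
      = ∑ t, q t * c (g t) := by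
  rw [← Finset.sum_fiberwise Finset.univ g (fun t => q t * c (g t))]
  refine Finset.sum_congr rfl fun k _ => ?_
  rw [Finset.sum_mul]
  refine Finset.sum_congr rfl fun t ht => ?_
  rw [(Finset.mem_filter.mp ht).2]

set_option maxHeartbeats 1000000 in
lemma sum_negMulLog_submod (q : α × β × γ → ℝ) (hq : ∀ t, 0 ≤ q t) :
    (∑ t, Real.negMulLog (q t))
      + ∑ y : β, Real.negMulLog (∑ t ∈ Finset.univ.filter (fun t : α×β×γ => t.2.1 = y), q t)
    ≤ (∑ u : α × β, Real.negMulLog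
          (∑ t ∈ Finset.univ.filter (fun t : α×β×γ => (t.1, t.2.1) = u), q t))
      + (∑ v : β × γ, Real.negMulLog
          (∑ t ∈ Finset.univ.filter (fun t : α×β×γ => t.2 = v), q t)) := by
  set qB : β → ℝ := fun y => ∑ t ∈ Finset.univ.filter (fun t : α×β×γ => t.2.1 = y), q t with hqB
  set qAB : α × β → ℝ := fun u => ∑ t ∈ Finset.univ.filter (fun t : α×β×γ => (t.1, t.2.1) = u), q t with hqAB
  set qBC : β × γ → ℝ := fun v => ∑ t ∈ Finset.univ.filter (fun t : α×β×γ => t.2 = v), q t with hqBC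
  have hqB0 : ∀ y, 0 ≤ qB y := fun y => Finset.sum_nonneg fun t _ => hq t
  have hqAB0 : ∀ u, 0 ≤ qAB u := fun u => Finset.sum_nonneg fun t _ => hq t
  have hqBC0 : ∀ v, 0 ≤ qBC v := fun v => Finset.sum_nonneg fun t _ => hq t
  -- rewrite marginal entropies as sums over t
  have eB : ∑ y : β, Real.negMulLog (qB y) = ∑ t, q t * (- Real.log (qB t.2.1)) := by
    rw [← marg_regroup q (fun t => t.2.1) (fun y => - Real.log (qB y))]
    refine Finset.sum_congr rfl fun y _ => ?_
    rw [Real.negMulLog]; ring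
  have eAB : ∑ u : α × β, Real.negMulLog (qAB u)
      = ∑ t, q t * (- Real.log (qAB (t.1, t.2.1))) := by
    rw [← marg_regroup q (fun t => (t.1, t.2.1)) (fun u => - Real.log (qAB u))]
    refine Finset.sum_congr rfl fun u _ => ?_
    rw [Real.negMulLog]; ring
  have eBC : ∑ v : β × γ, Real.negMulLog (qBC v)
      = ∑ t, q t * (- Real.log (qBC t.2)) := by
    rw [← marg_regroup q (fun t => t.2) (fun v => - Real.log (qBC v))]
    refine Finset.sum_congr rfl fun v _ => ?_
    rw [Real.negMulLog]; ring
  -- membership bounds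
  have hle : ∀ t : α × β × γ, q t ≤ qAB (t.1, t.2.1) ∧ q t ≤ qBC t.2 ∧ q t ≤ qB t.2.1 := by
    intro t
    refine ⟨?_, ?_, ?_⟩ <;>
      exact Finset.single_le_sum (f := q) (fun s _ => hq s)
        (by simp [Finset.mem_filter])
  -- termwise bound
  have hterm : ∀ t : α × β × γ,
      Real.negMulLog (q t) + q t * (- Real.log (qB t.2.1))
        - q t * (- Real.log (qAB (t.1, t.2.1))) - q t * (- Real.log (qBC t.2))
      ≤ qAB (t.1, t.2.1) * qBC t.2 / qB t.2.1 - q t := by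
    intro t
    obtain ⟨h1, h2, h3⟩ := hle t
    rcases eq_or_lt_of_le (hq t) with h0 | h0
    · rw [← h0]
      simp only [Real.negMulLog_zero, zero_mul, sub_zero, add_zero, sub_zero]
      have := div_nonneg (mul_nonneg (hqAB0 (t.1, t.2.1)) (hqBC0 t.2)) (hqB0 t.2.1)
      linarith
    · have hM1 : 0 < qAB (t.1, t.2.1) := lt_of_lt_of_le h0 h1
      have hM2 : 0 < qBC t.2 := lt_of_lt_of_le h0 h2
      have hb : 0 < qB t.2.1 := lt_of_lt_of_le h0 h3
      have hr : 0 < qAB (t.1, t.2.1) * qBC t.2 / (qB t.2.1 * q t) := by positivity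
      have hlog := Real.log_le_sub_one_of_pos hr
      have elog : Real.log (qAB (t.1, t.2.1) * qBC t.2 / (qB t.2.1 * q t))
          = Real.log (qAB (t.1, t.2.1)) + Real.log (qBC t.2)
            - Real.log (qB t.2.1) - Real.log (q t) := by
        rw [Real.log_div (by positivity) (by positivity), Real.log_mul hM1.ne' hM2.ne',
          Real.log_mul hb.ne' h0.ne']
        ring
      rw [elog] at hlog
      have h4 := mul_le_mul_of_nonneg_left hlog (le_of_lt h0)
      have h5 : q t * (qAB (t.1, t.2.1) * qBC t.2 / (qB t.2.1 * q t) - 1)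
          = qAB (t.1, t.2.1) * qBC t.2 / qB t.2.1 - q t := by
        field_simp
      rw [h5] at h4
      calc Real.negMulLog (q t) + q t * (- Real.log (qB t.2.1))
            - q t * (- Real.log (qAB (t.1, t.2.1))) - q t * (- Real.log (qBC t.2))
          = q t * (Real.log (qAB (t.1, t.2.1)) + Real.log (qBC t.2)
              - Real.log (qB t.2.1) - Real.log (q t)) := by
            rw [Real.negMulLog]; ring
        _ ≤ _ := h4
  -- marginals of marginals
  have m1 : ∀ y : β, ∑ x : α, qAB (x, y) = qB y := by
    intro y
    simp only [hqB, hqAB]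
    rw [← Finset.sum_fiberwise_of_maps_to
      (s := Finset.univ.filter (fun t : α×β×γ => t.2.1 = y)) (g := fun t => t.1)
      (t := Finset.univ) (fun t _ => Finset.mem_univ _) q]
    refine Finset.sum_congr rfl fun x _ => ?_
    refine Finset.sum_congr ?_ fun _ _ => rfl
    ext t
    simp only [Finset.mem_filter, Finset.mem_univ, true_and, Prod.mk.injEq]
    tauto
  have m2 : ∀ y : β, ∑ z : γ, qBC (y, z) = qB y := by
    intro y
    simp only [hqB, hqBC]
    rw [← Finset.sum_fiberwise_of_maps_to
      (s := Finset.univ.filter (fun t : α×β×γ => t.2.1 = y)) (g := fun t => t.2.2)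
      (t := Finset.univ) (fun t _ => Finset.mem_univ _) q]
    refine Finset.sum_congr rfl fun z _ => ?_
    refine Finset.sum_congr ?_ fun _ _ => rfl
    ext t
    simp only [Finset.mem_filter, Finset.mem_univ, true_and, Prod.ext_iff]
    try tauto
  -- total mass of the bound
  have sumM : ∑ t : α×β×γ, qAB (t.1, t.2.1) * qBC t.2 / qB t.2.1 = ∑ t, q t := by
    calc ∑ t : α×β×γ, qAB (t.1, t.2.1) * qBC t.2 / qB t.2.1
        = ∑ x : α, ∑ y : β, ∑ z : γ, qAB (x, y) * qBC (y, z) / qB y := by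
          rw [Fintype.sum_prod_type]
          exact Finset.sum_congr rfl fun x _ => by rw [Fintype.sum_prod_type]
      _ = ∑ y : β, ∑ x : α, ∑ z : γ, qAB (x, y) * qBC (y, z) / qB y := Finset.sum_comm
      _ = ∑ y : β, (∑ x : α, qAB (x, y)) * (∑ z : γ, qBC (y, z)) / qB y := by
          refine Finset.sum_congr rfl fun y _ => ?_
          rw [Finset.sum_mul_sum, Finset.sum_div]
          refine Finset.sum_congr rfl fun x _ => ?_
          rw [Finset.sum_div]
      _ = ∑ y : β, qB y := by
          refine Finset.sum_congr rfl fun y _ => ?_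
          rw [m1, m2]
          rcases eq_or_ne (qB y) 0 with h | h
          · rw [h]; simp
          · field_simp
      _ = ∑ t, q t := by
          simp only [hqB]
          exact Finset.sum_fiberwise Finset.univ (fun t => t.2.1) q
  have total := Finset.sum_le_sum (fun t (_ : t ∈ Finset.univ) => hterm t)
  rw [eB, eAB, eBC]
  simp only [Finset.sum_sub_distrib, Finset.sum_add_distrib] at total
  rw [sumM] at total
  linarith

end Submod

lemma shannonEntropy_submod {Ω α β γ : Type*} [Fintype Ω] [Fintype α] [Fintype β] [Fintype γ]
    [DecidableEq α] [DecidableEq β] [DecidableEq γ]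
    (p : Ω → ℝ) (hp : ∀ ω, 0 ≤ p ω) (A : Ω → α) (B : Ω → β) (C : Ω → γ) :
    shannonEntropy p (fun ω => (A ω, B ω, C ω)) + shannonEntropy p B
      ≤ shannonEntropy p (fun ω => (A ω, B ω)) + shannonEntropy p (fun ω => (B ω, C ω)) := by
  classical
  set q : α × β × γ → ℝ :=
    fun t => ∑ ω ∈ Finset.univ.filter (fun ω => (A ω, B ω, C ω) = t), p ω with hq
  have hq0 : ∀ t, 0 ≤ q t := fun t => Finset.sum_nonneg fun ω _ => hp ω
  have main := sum_negMulLog_submod q hq0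
  have e3 : shannonEntropy p (fun ω => (A ω, B ω, C ω)) = ∑ t : α × β × γ,
      Real.negMulLog (q t) := rfl
  have eB : shannonEntropy p B
      = ∑ y : β, Real.negMulLog (∑ t ∈ Finset.univ.filter (fun t : α×β×γ => t.2.1 = y), q t) := by
    unfold shannonEntropy
    refine Finset.sum_congr rfl fun y _ => ?_
    have h := fiber_sum p (fun ω => (A ω, B ω, C ω)) (fun t => t.2.1) y
    exact congrArg Real.negMulLog (by simpa [hq] using h)
  have eAB : shannonEntropy p (fun ω => (A ω, B ω))
      = ∑ u : α × β, Real.negMulLog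
          (∑ t ∈ Finset.univ.filter (fun t : α×β×γ => (t.1, t.2.1) = u), q t) := by
    unfold shannonEntropy
    refine Finset.sum_congr rfl fun u _ => ?_
    have h := fiber_sum p (fun ω => (A ω, B ω, C ω)) (fun t => (t.1, t.2.1)) u
    exact congrArg Real.negMulLog (by simpa [hq] using h)
  have eBC : shannonEntropy p (fun ω => (B ω, C ω))
      = ∑ v : β × γ, Real.negMulLog
          (∑ t ∈ Finset.univ.filter (fun t : α×β×γ => t.2 = v), q t) := by
    unfold shannonEntropy
    refine Finset.sum_congr rfl fun v _ => ?_
    have h := fiber_sum p (fun ω => (A ω, B ω, C ω)) (fun t => t.2) v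
    exact congrArg Real.negMulLog (by simpa [hq] using h)
  rw [e3, eB, eAB, eBC]
  exact main

/-- `N`-partite entropic Bell inequality `M_N`: with `X j i` the `i`-th observable of
party `j`,
`H(X¹₁,…,Xᴺ₁) - H(X¹₀,…,Xᴺ₀) - ∑_j H(X¹₀,…,Xʲ₁,…,Xᴺ₀) + ∑_j H(X¹₀,…,X̂ʲ₀,…,Xᴺ₀) ≤ 0`,
where in the first sum exactly party `j`'s variable has subscript `1`, and in the
second sum party `j`'s variable is omitted. -/
theorem multipartite_MN {Ω α : Type*} [Fintype Ω] [Fintype α] [DecidableEq α] {N : ℕ}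
    (p : Ω → ℝ) (hp : ∀ ω, 0 ≤ p ω) (hsum : ∑ ω, p ω = 1)
    (X : Fin N → Fin 2 → Ω → α) :
    shannonEntropy p (fun ω => fun j => X j 1 ω) -
      shannonEntropy p (fun ω => fun j => X j 0 ω) -
      (∑ j : Fin N, shannonEntropy p
        (fun ω => fun j' => X j' (if j' = j then 1 else 0) ω)) +
      (∑ j : Fin N, shannonEntropy p
        (fun ω => fun j' : {k : Fin N // k ≠ j} => X j'.1 0 ω)) ≤ 0 := by
  classical
  set Z : ℕ → Ω → (Fin N → α) × (Fin N → α) := fun k ω =>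
    (fun j => X j (if (j : ℕ) < k then 1 else 0) ω, fun j => X j 0 ω) with hZ
  have key : ∀ k, k ≤ N → shannonEntropy p (Z k)
      ≤ shannonEntropy p (fun ω => fun j => X j 0 ω)
        + ∑ j ∈ Finset.univ.filter (fun j : Fin N => (j : ℕ) < k),
            (shannonEntropy p (fun ω => fun j' => X j' (if j' = j then 1 else 0) ω)
              - shannonEntropy p (fun ω => fun j' : {k : Fin N // k ≠ j} => X j'.1 0 ω)) := by
    intro k
    induction k with
    | zero =>
      intro _
      have e0 : shannonEntropy p (Z 0) = shannonEntropy p (fun ω => fun j => X j 0 ω) := by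
        refine shannonEntropy_congr p hp _ _ Prod.snd (fun b => (b, b)) (fun ω => rfl) ?_
        intro ω
        refine Prod.ext ?_ rfl
        funext j
        simp [hZ]
      rw [e0]
      simp
    | succ k ih =>
      intro hk1
      have hk : k < N := hk1
      have ihk := ih (le_of_lt hk)
      set J : Fin N := ⟨k, hk⟩ with hJ
      set B : Ω → ({k' : Fin N // k' ≠ J} → α) := fun ω => fun j' => X j'.1 0 ω with hB
      set C : Ω → α := fun ω => X J 1 ω with hC
      have step := shannonEntropy_submod p hp (Z k) B C
      -- identify the three entropies
      have eZab : shannonEntropy p (fun ω => (Z k ω, B ω)) = shannonEntropy p (Z k) := by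
        refine shannonEntropy_congr p hp _ _ Prod.fst
          (fun a => (a, fun j' => a.2 j'.1)) (fun ω => rfl) (fun ω => rfl)
      have eBC : shannonEntropy p (fun ω => (B ω, C ω))
          = shannonEntropy p (fun ω => fun j' => X j' (if j' = J then 1 else 0) ω) := by
        refine shannonEntropy_congr p hp _ _
          (fun v => fun j' : Fin N => if h : j' = J then v.2 else v.1 ⟨j', h⟩)
          (fun m => (fun j' => m j'.1, m J)) ?_ ?_
        · intro ω
          funext j'
          by_cases h : j' = J
          · subst h
            simp [hB, hC]
          · simp [hB, hC, h]
        · intro ω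
          refine Prod.ext ?_ ?_
          · funext j'
            simp [hB, j'.2]
          · simp [hC]
      have eZ1 : shannonEntropy p (fun ω => (Z k ω, B ω, C ω)) = shannonEntropy p (Z (k+1)) := by
        refine shannonEntropy_congr p hp _ _
          (fun t => ((fun j : Fin N => if j = J then t.2.2 else t.1.1 j), t.1.2))
          (fun z => ((fun j : Fin N => if (j : ℕ) < k then z.1 j else z.2 j, z.2),
            (fun j' : {k' : Fin N // k' ≠ J} => z.2 j'.1, z.1 J))) ?_ ?_
        · intro ω
          refine Prod.ext ?_ rfl
          funext j
          by_cases h : j = J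
          · subst h
            simp [hZ, hC, hJ]
          · have hv : (j : ℕ) ≠ k := by
              intro hvk
              exact h (Fin.ext (by simp [hJ, hvk]))
            simp only [hZ, if_neg h]
            rcases Nat.lt_or_ge (j : ℕ) k with hlt | hge
            · rw [if_pos hlt, if_pos (by omega)]
            · rw [if_neg (by omega), if_neg (by omega)]
        · intro ω
          refine Prod.ext (Prod.ext ?_ rfl) (Prod.ext rfl ?_)
          · funext j
            simp only [hZ]
            rcases Nat.lt_or_ge (j : ℕ) k with hlt | hge
            · rw [if_pos hlt, if_pos (by omega), if_pos hlt]
            · rw [if_neg (by omega), if_neg (by omega)]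
          · simp [hZ, hC, hJ]
      rw [eZab, eBC, eZ1] at step
      have hins : Finset.univ.filter (fun j : Fin N => (j : ℕ) < k + 1)
          = insert J (Finset.univ.filter (fun j : Fin N => (j : ℕ) < k)) := by
        ext j
        simp only [Finset.mem_filter, Finset.mem_univ, true_and, Finset.mem_insert, Fin.ext_iff,
          hJ]
        omega
      rw [hins, Finset.sum_insert (by simp [hJ])]
      linarith
  have hZN : shannonEntropy p (fun ω => fun j => X j 1 ω) ≤ shannonEntropy p (Z N) := by
    have h := shannonEntropy_comp_le p hp (Z N) Prod.fst
    have e : (fun ω => Prod.fst (Z N ω)) = (fun ω => fun j : Fin N => X j 1 ω) := by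
      funext ω
      funext j
      simp [hZ, j.isLt]
    rwa [e] at h
  have hkN := key N le_rfl
  have hfilt : Finset.univ.filter (fun j : Fin N => (j : ℕ) < N) = Finset.univ := by
    ext j
    simp [j.isLt]
  rw [hfilt, Finset.sum_sub_distrib] at hkN
  linarith
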